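/- arXiv:2402.15365 — 6 statements merged into one kernel-verified Lean document; each statement's English description precedes it below -/
import Mathlib

section
/- Let β ∈ ℝ^p, α₁, α₂ ∈ ℝ, c₁, c₂ ∈ (0,1), and let x₁, x₂ ∈ ℝ^p satisfy βᵀx₁ ≠ βᵀx₂. If (1 − σ(α₁ + βᵀx_k))/(1 − c₁) = (1 − σ(α₂ + βᵀx_k))/(1 − c₂) for k = 1, 2, then α₁ = α₂ and c₁ = c₂. (This is the key step showing that, with unlabeled data, the intercept of the logistic model is identifiable whenever β ≠ 0: the control-to-marginal density ratio f₀(x)/f(x) = (1 − φ(x,θ))/(1 − c) evaluated at two points with different values of βᵀx determines α.) -/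
/-- The logistic function `σ(t) = exp(t)/(1 + exp(t))`. -/
noncomputable def logistic (t : ℝ) : ℝ := Real.exp t / (1 + Real.exp t)

/-!
The reciprocal of the control-to-marginal ratio, `(1 - c) (1 + exp α · exp s)`, is an affine
function of `exp s` with intercept `1 - c` and slope `(1 - c) exp α`. Since `exp` is injective,
two distinct values of `s` give two distinct nodes, so equal ratios force equal intercepts
(hence `c₁ = c₂`) and equal slopes (hence `exp α₁ = exp α₂`).
-/

open Real

lemma one_sub_logistic (t : ℝ) : 1 - logistic t = (1 + exp t)⁻¹ := by
  have h : 1 + exp t ≠ 0 := by positivity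
  rw [logistic]
  field_simp
  ring

lemma inv_one_sub_logistic_add_div (α s c : ℝ) :
    ((1 - logistic (α + s)) / (1 - c))⁻¹ = (1 - c) + (1 - c) * exp α * exp s := by
  rw [inv_div, one_sub_logistic, div_inv_eq_mul, exp_add]
  ring

lemma eq_and_eq_of_affine_eq_at_two_points {a b a' b' u v : ℝ} (huv : u ≠ v)
    (hu : a + b * u = a' + b' * u) (hv : a + b * v = a' + b' * v) : a = a' ∧ b = b' := by
  have hb : b = b' := by
    have h : (b - b') * (u - v) = 0 := by linear_combination hu - hv
    simpa [sub_eq_zero, huv] using h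
  exact ⟨by subst hb; linarith, hb⟩

lemma logistic_intercept_eq_of_ratio_eq_at_two_points {α₁ α₂ c₁ c₂ s₁ s₂ : ℝ}
    (hc₁ : c₁ ≠ 1) (hs : s₁ ≠ s₂)
    (h₁ : (1 - logistic (α₁ + s₁)) / (1 - c₁) = (1 - logistic (α₂ + s₁)) / (1 - c₂))
    (h₂ : (1 - logistic (α₁ + s₂)) / (1 - c₁) = (1 - logistic (α₂ + s₂)) / (1 - c₂)) :
    α₁ = α₂ ∧ c₁ = c₂ := by
  have hu := congrArg (·⁻¹) h₁
  have hv := congrArg (·⁻¹) h₂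
  simp only [inv_one_sub_logistic_add_div] at hu hv
  obtain ⟨hintercept, hslope⟩ := eq_and_eq_of_affine_eq_at_two_points (exp_injective.ne hs) hu hv
  have hc : c₁ = c₂ := by linarith
  subst hc
  have hc₁' : 1 - c₁ ≠ 0 := sub_ne_zero.mpr hc₁.symm
  exact ⟨exp_injective (mul_left_cancel₀ hc₁' hslope), rfl⟩

theorem intercept_identifiable_from_two_points_general
    (p : ℕ) (β : Fin p → ℝ) (α₁ α₂ c₁ c₂ : ℝ)
    (hc₁ : c₁ ∈ Set.Ioo (0 : ℝ) 1)
    (x₁ x₂ : Fin p → ℝ) (hx : (∑ i, β i * x₁ i) ≠ ∑ i, β i * x₂ i)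
    (h1 : (1 - logistic (α₁ + ∑ i, β i * x₁ i)) / (1 - c₁)
        = (1 - logistic (α₂ + ∑ i, β i * x₁ i)) / (1 - c₂))
    (h2 : (1 - logistic (α₁ + ∑ i, β i * x₂ i)) / (1 - c₁)
        = (1 - logistic (α₂ + ∑ i, β i * x₂ i)) / (1 - c₂)) :
    α₁ = α₂ ∧ c₁ = c₂ :=
  logistic_intercept_eq_of_ratio_eq_at_two_points hc₁.2.ne hx h1 h2

/-- Key identifiability step: the control-to-marginal density ratio
`(1 − σ(α + βᵀx))/(1 − c)` evaluated at two points with different values of `βᵀx`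
determines the intercept `α` (and the marginal case probability `c`). -/
theorem intercept_identifiable_from_two_points
    (p : ℕ) (β : Fin p → ℝ) (α₁ α₂ c₁ c₂ : ℝ)
    (hc₁ : c₁ ∈ Set.Ioo (0 : ℝ) 1) (hc₂ : c₂ ∈ Set.Ioo (0 : ℝ) 1)
    (x₁ x₂ : Fin p → ℝ) (hx : (∑ i, β i * x₁ i) ≠ ∑ i, β i * x₂ i)
    (h1 : (1 - logistic (α₁ + ∑ i, β i * x₁ i)) / (1 - c₁)
        = (1 - logistic (α₂ + ∑ i, β i * x₁ i)) / (1 - c₂))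
    (h2 : (1 - logistic (α₁ + ∑ i, β i * x₂ i)) / (1 - c₁)
        = (1 - logistic (α₂ + ∑ i, β i * x₂ i)) / (1 - c₂)) :
    α₁ = α₂ ∧ c₁ = c₂ :=
  intercept_identifiable_from_two_points_general p β α₁ α₂ c₁ c₂ hc₁ x₁ x₂ hx h1 h2
end

section
/- Let N ≥ 1, let n₁, n₀ ≥ 0 be reals with n₁ + n₀ ≤ N, let c ∈ (0,1), and let φ₁, …, φ_N ∈ (0,1). Define p*_i = (n₁ φ_i / c + n₀ (1 − φ_i)/(1 − c) + N − n₁ − n₀)^{-1} for i = 1, …, N, and assume Σ_{i=1}^N p*_i = 1 and Σ_{i=1}^N φ_i p*_i = c. Then for every p = (p₁, …, p_N) with p_i > 0, Σ_{i=1}^N p_i = 1 and Σ_{i=1}^N φ_i p_i = c, one has Σ_{i=1}^N log p_i ≤ Σ_{i=1}^N log p*_i, with equality if and only if p = p*. That is, p* is the unique maximizer of Σ log p_i over the convex constraint set. -/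
/-!
Put `Dᵢ = 1 / p*ᵢ`. The two constraints make `Σ pᵢ Dᵢ` the same number `N` for every feasible
`p`, because `Dᵢ` is an affine combination of `φᵢ` and `1` whose coefficients are exactly the
Lagrange multipliers of the two constraints. Applying `log x ≤ x - 1` to `pᵢ / p*ᵢ = pᵢ Dᵢ` and
summing gives `Σ log pᵢ - Σ log p*ᵢ ≤ Σ pᵢ Dᵢ - N = 0`, and the inequality is strict as soon as
some `pᵢ ≠ p*ᵢ`.
-/

open Finset Real

lemma log_sub_log_le_div_sub_one {x y : ℝ} (hx : 0 < x) (hy : 0 < y) :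
    log x - log y ≤ x / y - 1 := by
  rw [← log_div hx.ne' hy.ne']
  exact log_le_sub_one_of_pos (div_pos hx hy)

lemma log_sub_log_lt_div_sub_one {x y : ℝ} (hx : 0 < x) (hy : 0 < y) (hxy : x ≠ y) :
    log x - log y < x / y - 1 := by
  rw [← log_div hx.ne' hy.ne']
  exact log_lt_sub_one_of_pos (div_pos hx hy) fun h => hxy ((div_eq_one_iff_eq hy.ne').mp h)

section SumLog

variable {ι : Type*} [Fintype ι] {p q : ι → ℝ}

lemma sum_log_sub_sum_log_le (hp : ∀ i, 0 < p i) (hq : ∀ i, 0 < q i) :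
    ∑ i, log (p i) - ∑ i, log (q i) ≤ ∑ i, p i / q i - Fintype.card ι := by
  have h := sum_le_sum fun i (_ : i ∈ univ) => log_sub_log_le_div_sub_one (hp i) (hq i)
  simpa [sum_sub_distrib] using h

lemma sum_log_sub_sum_log_lt (hp : ∀ i, 0 < p i) (hq : ∀ i, 0 < q i) (hpq : p ≠ q) :
    ∑ i, log (p i) - ∑ i, log (q i) < ∑ i, p i / q i - Fintype.card ι := by
  obtain ⟨j, hj⟩ := Function.ne_iff.mp hpq
  have h := sum_lt_sum (fun i (_ : i ∈ univ) => log_sub_log_le_div_sub_one (hp i) (hq i))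
    ⟨j, mem_univ j, log_sub_log_lt_div_sub_one (hp j) (hq j) hj⟩
  simpa [sum_sub_distrib] using h

theorem sum_log_le_sum_log_of_sum_div_le_card (hp : ∀ i, 0 < p i) (hq : ∀ i, 0 < q i)
    (hpq : ∑ i, p i / q i ≤ Fintype.card ι) :
    ∑ i, log (p i) ≤ ∑ i, log (q i) := by
  linarith [sum_log_sub_sum_log_le hp hq]

theorem eq_of_sum_log_eq_of_sum_div_le_card (hp : ∀ i, 0 < p i) (hq : ∀ i, 0 < q i)
    (hpq : ∑ i, p i / q i ≤ Fintype.card ι) (heq : ∑ i, log (p i) = ∑ i, log (q i)) :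
    p = q := by
  by_contra hne
  linarith [sum_log_sub_sum_log_lt hp hq hne]

end SumLog

/-- `1 / p*ᵢ` as a function of `x = φᵢ`, with `m` in place of the sample size `N`. -/
noncomputable def mixtureDenom (n₁ n₀ m c x : ℝ) : ℝ :=
  n₁ * x / c + n₀ * (1 - x) / (1 - c) + m - n₁ - n₀

lemma mixtureDenom_pos {n₁ n₀ m c x : ℝ} (hn₁ : 0 ≤ n₁) (hn₀ : 0 ≤ n₀) (hm : 0 < m)
    (hsum : n₁ + n₀ ≤ m) (hc : c ∈ Set.Ioo (0 : ℝ) 1) (hx : x ∈ Set.Ioo (0 : ℝ) 1) :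
    0 < mixtureDenom n₁ n₀ m c x := by
  obtain ⟨hc0, hc1⟩ := hc
  obtain ⟨hx0, hx1⟩ := hx
  have h₁ : 0 < x / c := div_pos hx0 hc0
  have h₀ : 0 < (1 - x) / (1 - c) := div_pos (by linarith) (by linarith)
  have h : mixtureDenom n₁ n₀ m c x
      = n₁ * (x / c) + n₀ * ((1 - x) / (1 - c)) + (m - n₁ - n₀) := by
    unfold mixtureDenom; ring
  rw [h]
  rcases hn₁.lt_or_eq with hn₁ | rfl
  · nlinarith [mul_pos hn₁ h₁, mul_nonneg hn₀ h₀.le]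
  · rcases hn₀.lt_or_eq with hn₀ | rfl
    · nlinarith [mul_pos hn₀ h₀]
    · linarith

lemma sum_mul_mixtureDenom {ι : Type*} [Fintype ι] {n₁ n₀ m c : ℝ} (hc0 : c ≠ 0) (hc1 : 1 - c ≠ 0)
    {φ p : ι → ℝ} (hp1 : ∑ i, p i = 1) (hpc : ∑ i, φ i * p i = c) :
    ∑ i, p i * mixtureDenom n₁ n₀ m c (φ i) = m := by
  have hterm : ∀ i, p i * mixtureDenom n₁ n₀ m c (φ i)
      = n₁ / c * (φ i * p i) + n₀ / (1 - c) * (p i - φ i * p i) + (m - n₁ - n₀) * p i := by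
    intro i
    unfold mixtureDenom
    field_simp
    ring
  simp only [hterm, sum_add_distrib, ← mul_sum, sum_sub_distrib, hp1, hpc]
  field_simp
  ring

theorem pstar_unique_maximizer_general
    (N : ℕ) (hN : 1 ≤ N) (n₁ n₀ : ℝ) (hn₁ : 0 ≤ n₁) (hn₀ : 0 ≤ n₀)
    (hsum : n₁ + n₀ ≤ (N : ℝ)) (c : ℝ) (hc : c ∈ Set.Ioo (0 : ℝ) 1)
    (φ : Fin N → ℝ) (hφ : ∀ i, φ i ∈ Set.Ioo (0 : ℝ) 1)
    (pstar : Fin N → ℝ)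
    (hpstar : ∀ i, pstar i
      = (n₁ * φ i / c + n₀ * (1 - φ i) / (1 - c) + (N : ℝ) - n₁ - n₀)⁻¹) :
    ∀ p : Fin N → ℝ, (∀ i, 0 < p i) → (∑ i, p i = 1) → (∑ i, φ i * p i = c) →
      (∑ i, Real.log (p i) ≤ ∑ i, Real.log (pstar i)) ∧
      ((∑ i, Real.log (p i) = ∑ i, Real.log (pstar i)) ↔ p = pstar) := by
  intro p hp hp1 hpc
  have hpstar' : ∀ i, pstar i = (mixtureDenom n₁ n₀ N c (φ i))⁻¹ := hpstar
  have hN' : (0 : ℝ) < N := by exact_mod_cast hN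
  have hpstar_pos : ∀ i, 0 < pstar i := fun i => by
    rw [hpstar']
    exact inv_pos.mpr (mixtureDenom_pos hn₁ hn₀ hN' hsum hc (hφ i))
  have hratio : ∑ i, p i / pstar i ≤ Fintype.card (Fin N) := by
    simp only [hpstar', div_inv_eq_mul, Fintype.card_fin]
    exact (sum_mul_mixtureDenom hc.1.ne' (sub_ne_zero.mpr hc.2.ne') hp1 hpc).le
  refine ⟨sum_log_le_sum_log_of_sum_div_le_card hp hpstar_pos hratio,
    eq_of_sum_log_eq_of_sum_div_le_card hp hpstar_pos hratio, ?_⟩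
  rintro rfl
  rfl

/-- The fixed-point weights `p*ᵢ = (n₁ φᵢ/c + n₀ (1 − φᵢ)/(1 − c) + N − n₁ − n₀)⁻¹`, when they
satisfy the probability constraint `Σ p*ᵢ = 1` and the mixture constraint `Σ φᵢ p*ᵢ = c`, form
the unique maximizer of `Σ log pᵢ` over the convex constraint set
`{p : pᵢ > 0, Σ pᵢ = 1, Σ φᵢ pᵢ = c}`. -/
theorem pstar_unique_maximizer
    (N : ℕ) (hN : 1 ≤ N) (n₁ n₀ : ℝ) (hn₁ : 0 ≤ n₁) (hn₀ : 0 ≤ n₀)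
    (hsum : n₁ + n₀ ≤ (N : ℝ)) (c : ℝ) (hc : c ∈ Set.Ioo (0 : ℝ) 1)
    (φ : Fin N → ℝ) (hφ : ∀ i, φ i ∈ Set.Ioo (0 : ℝ) 1)
    (pstar : Fin N → ℝ)
    (hpstar : ∀ i, pstar i
      = (n₁ * φ i / c + n₀ * (1 - φ i) / (1 - c) + (N : ℝ) - n₁ - n₀)⁻¹)
    (hpstar1 : ∑ i, pstar i = 1) (hpstarc : ∑ i, φ i * pstar i = c) :
    ∀ p : Fin N → ℝ, (∀ i, 0 < p i) → (∑ i, p i = 1) → (∑ i, φ i * p i = c) →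
      (∑ i, Real.log (p i) ≤ ∑ i, Real.log (pstar i)) ∧
      ((∑ i, Real.log (p i) = ∑ i, Real.log (pstar i)) ↔ p = pstar) :=
  pstar_unique_maximizer_general N hN n₁ n₀ hn₁ hn₀ hsum c hc φ hφ pstar hpstar
end

section
/- Let n₁, n₀ > 0 and N ≥ n₁ + n₀, and let φ₁, …, φ_N ∈ (0,1). Define on the open simplex Δ = {p ∈ ℝ^N : p_i > 0, Σ_{i=1}^N p_i = 1} the function L(p) = Σ_{i=1}^N log p_i − n₁ log(Σ_{i=1}^N φ_i p_i) − n₀ log(1 − Σ_{i=1}^N φ_i p_i) (note 0 < Σ φ_i p_i < 1 on Δ). If p̂ ∈ Δ maximizes L over Δ, then, writing ĉ = Σ_{i=1}^N φ_i p̂_i, the maximizer satisfies the fixed-point equations p̂_i = (n₁ φ_i / ĉ + n₀ (1 − φ_i)/(1 − ĉ) + N − n₁ − n₀)^{-1} for every i = 1, …, N. -/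
/-!
At a maximizer of a differentiable function on the open simplex, both `e_a − e_b` and its
negative are feasible directions, so all partial derivatives coincide. For `L` they read
`1/p̂ᵢ − λ φᵢ` with `λ = n₁/ĉ − n₀/(1 − ĉ)`, hence
`1/p̂ᵢ = λ φᵢ + μ` for a common `μ`; multiplying by `p̂ᵢ` and summing over `i` gives
`N = λ ĉ + μ`, which pins down `μ` and yields the fixed-point equations.
-/

open Finset Real

def openSimplex (ι : Type*) [Fintype ι] : Set (ι → ℝ) :=
  {p | (∀ i, 0 < p i) ∧ ∑ i, p i = 1}

variable {ι : Type*} [Fintype ι]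

noncomputable def profileLogLik (n₁ n₀ : ℝ) (φ p : ι → ℝ) : ℝ :=
  (∑ i, log (p i)) - n₁ * log (∑ i, φ i * p i) - n₀ * log (1 - ∑ i, φ i * p i)

theorem sum_mul_mem_Ioo_of_mem_openSimplex {φ p : ι → ℝ} (hφ : ∀ i, φ i ∈ Set.Ioo (0 : ℝ) 1)
    (hp : p ∈ openSimplex ι) : ∑ i, φ i * p i ∈ Set.Ioo (0 : ℝ) 1 := by
  obtain ⟨hpos, hsum⟩ := hp
  have hne : (univ : Finset ι).Nonempty :=
    nonempty_of_sum_ne_zero (f := p) (by rw [hsum]; exact one_ne_zero)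
  refine ⟨sum_pos (fun i _ => mul_pos (hφ i).1 (hpos i)) hne, hsum ▸ ?_⟩
  exact sum_lt_sum_of_nonempty hne fun i _ => mul_lt_of_lt_one_left (hpos i) (hφ i).2

theorem IsMaxOn.hasFDerivAt_apply_single_eq [DecidableEq ι] {F : (ι → ℝ) → ℝ}
    {F' : (ι → ℝ) →L[ℝ] ℝ} {p : ι → ℝ} (hmax : IsMaxOn F (openSimplex ι) p)
    (hp : p ∈ openSimplex ι) (hF : HasFDerivAt F F' p) (a b : ι) :
    F' (Pi.single a 1) = F' (Pi.single b 1) := by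
  set v : ι → ℝ := Pi.single a 1 - Pi.single b 1
  have hline : HasDerivAt (fun t : ℝ => p + t • v) v 0 := by
    simpa using ((hasDerivAt_id (0 : ℝ)).smul_const v).const_add p
  have hmem : ∀ᶠ t in nhds (0 : ℝ), p + t • v ∈ openSimplex ι := by
    refine (Filter.eventually_all.2 fun i => ?_).and (Filter.Eventually.of_forall fun t => ?_)
    · have hcont : Continuous fun t : ℝ => (p + t • v) i := by fun_prop
      exact continuousAt_const.eventually_lt hcont.continuousAt (by simpa using hp.1 i)
    · simp [v, sum_add_distrib, ← mul_sum, hp.2]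
  have hloc : IsLocalMax (fun t : ℝ => F (p + t • v)) 0 :=
    hmem.mono fun t ht => by simpa using hmax ht
  have h0 := hloc.hasDerivAt_eq_zero (hF.comp_hasDerivAt_of_eq (0 : ℝ) hline (by simp))
  rwa [map_sub, sub_eq_zero] at h0

theorem hasFDerivAt_profileLogLik (n₁ n₀ : ℝ) {φ p : ι → ℝ} {c : ℝ} (hp : ∀ i, p i ≠ 0)
    (hc : ∑ i, φ i * p i = c) (hc₀ : c ≠ 0) (hc₁ : 1 - c ≠ 0) :
    HasFDerivAt (profileLogLik n₁ n₀ φ)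
      (∑ i, ((p i)⁻¹ - (n₁ / c - n₀ / (1 - c)) * φ i) • ContinuousLinearMap.proj i :
        (ι → ℝ) →L[ℝ] ℝ) p := by
  have hlin : HasFDerivAt (fun q : ι → ℝ => ∑ i, φ i * q i)
      (∑ i, φ i • ContinuousLinearMap.proj i : (ι → ℝ) →L[ℝ] ℝ) p :=
    HasFDerivAt.fun_sum fun i _ => (hasFDerivAt_apply i p).const_mul (φ i)
  have hlogs : HasFDerivAt (fun q : ι → ℝ => ∑ i, log (q i))
      (∑ i, (p i)⁻¹ • ContinuousLinearMap.proj i : (ι → ℝ) →L[ℝ] ℝ) p :=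
    HasFDerivAt.fun_sum fun i _ => (hasFDerivAt_apply i p).log (hp i)
  have h := (hlogs.sub ((hlin.log (hc ▸ hc₀)).const_mul n₁)).sub
    (((hlin.const_sub 1).log (hc ▸ hc₁)).const_mul n₀)
  refine h.congr_fderiv (ContinuousLinearMap.ext fun v => ?_)
  simp only [hc, smul_neg, sub_neg_eq_add, add_apply, sub_apply, _root_.sum_apply, smul_apply,
    ContinuousLinearMap.proj_apply, smul_eq_mul, mul_sum,
    ← sum_sub_distrib, ← sum_add_distrib]
  exact sum_congr rfl fun i _ => by ring

theorem inv_eq_add_card_sub_of_inv_sub_eq {p h : ι → ℝ} (hp : ∀ i, p i ≠ 0)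
    (hsum : ∑ i, p i = 1) (heq : ∀ i j, (p i)⁻¹ - h i = (p j)⁻¹ - h j) (i : ι) :
    (p i)⁻¹ = h i + (Fintype.card ι - ∑ j, p j * h j) := by
  have hmean : ∑ j, p j * ((p j)⁻¹ - h j) = (p i)⁻¹ - h i := by
    simp only [heq _ i, ← sum_mul, hsum, one_mul]
  have hcount : ∑ j, p j * ((p j)⁻¹ - h j) = Fintype.card ι - ∑ j, p j * h j := by
    simp only [mul_sub, mul_inv_cancel₀ (hp _), sum_sub_distrib, sum_const, card_univ,
      nsmul_eq_mul, mul_one]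
  linarith

theorem profile_maximizer_fixed_point_general
    (N : ℕ) (n₁ n₀ : ℝ)
    (φ : Fin N → ℝ) (hφ : ∀ i, φ i ∈ Set.Ioo (0 : ℝ) 1)
    (phat : Fin N → ℝ) (hphat_pos : ∀ i, 0 < phat i) (hphat_sum : ∑ i, phat i = 1)
    (hmax : ∀ p : Fin N → ℝ, (∀ i, 0 < p i) → (∑ i, p i = 1) →
      (∑ i, Real.log (p i)) - n₁ * Real.log (∑ i, φ i * p i)
          - n₀ * Real.log (1 - ∑ i, φ i * p i)
        ≤ (∑ i, Real.log (phat i)) - n₁ * Real.log (∑ i, φ i * phat i)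
          - n₀ * Real.log (1 - ∑ i, φ i * phat i)) :
    ∀ i, phat i
      = (n₁ * φ i / (∑ j, φ j * phat j)
          + n₀ * (1 - φ i) / (1 - ∑ j, φ j * phat j) + (N : ℝ) - n₁ - n₀)⁻¹ := by
  intro i
  have hphat : phat ∈ openSimplex (Fin N) := ⟨hphat_pos, hphat_sum⟩
  obtain ⟨hc₀, hc₁⟩ := sum_mul_mem_Ioo_of_mem_openSimplex hφ hphat
  set c := ∑ j, φ j * phat j with hc
  have hc₁' : 1 - c ≠ 0 := (sub_pos.2 hc₁).ne'
  have hne : ∀ k, phat k ≠ 0 := fun k => (hphat_pos k).ne'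
  have hfoc := IsMaxOn.hasFDerivAt_apply_single_eq (fun p hp => hmax p hp.1 hp.2) hphat
    (hasFDerivAt_profileLogLik n₁ n₀ hne hc.symm hc₀.ne' hc₁')
  set lam := n₁ / c - n₀ / (1 - c)
  have hinv := inv_eq_add_card_sub_of_inv_sub_eq (h := fun k => lam * φ k)
    hne hphat_sum (fun a b => by simpa [Pi.single_apply] using hfoc a b) i
  have hweighted : ∑ j, phat j * (lam * φ j) = lam * c := by
    rw [hc, mul_sum]
    exact sum_congr rfl fun j _ => by ring
  rw [hweighted, Fintype.card_fin] at hinv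
  rw [← inv_inv (phat i), hinv]
  congr 1
  simp only [lam]
  field_simp
  ring

/-- Any maximizer `p̂` over the open simplex of the profile log-likelihood
`L(p) = Σ log pᵢ − n₁ log(Σ φᵢ pᵢ) − n₀ log(1 − Σ φᵢ pᵢ)` satisfies the fixed-point
equations `p̂ᵢ = (n₁ φᵢ/ĉ + n₀ (1 − φᵢ)/(1 − ĉ) + N − n₁ − n₀)⁻¹` with `ĉ = Σ φᵢ p̂ᵢ`. -/
theorem profile_maximizer_fixed_point
    (N : ℕ) (n₁ n₀ : ℝ) (hn₁ : 0 < n₁) (hn₀ : 0 < n₀) (hN : n₁ + n₀ ≤ (N : ℝ))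
    (φ : Fin N → ℝ) (hφ : ∀ i, φ i ∈ Set.Ioo (0 : ℝ) 1)
    (phat : Fin N → ℝ) (hphat_pos : ∀ i, 0 < phat i) (hphat_sum : ∑ i, phat i = 1)
    (hmax : ∀ p : Fin N → ℝ, (∀ i, 0 < p i) → (∑ i, p i = 1) →
      (∑ i, Real.log (p i)) - n₁ * Real.log (∑ i, φ i * p i)
          - n₀ * Real.log (1 - ∑ i, φ i * p i)
        ≤ (∑ i, Real.log (phat i)) - n₁ * Real.log (∑ i, φ i * phat i)
          - n₀ * Real.log (1 - ∑ i, φ i * phat i)) :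
    ∀ i, phat i
      = (n₁ * φ i / (∑ j, φ j * phat j)
          + n₀ * (1 - φ i) / (1 - ∑ j, φ j * phat j) + (N : ℝ) - n₁ - n₀)⁻¹ :=
  profile_maximizer_fixed_point_general N n₁ n₀ φ hφ phat hphat_pos hphat_sum hmax
end

section
/- Let S ⊆ ℝ^p be a set whose affine span is all of ℝ^p, in the sense that if a + uᵀx = 0 for every x ∈ S (with a ∈ ℝ, u ∈ ℝ^p) then a = 0 and u = 0. Let θ₁ = (α₁, β₁), θ₂ = (α₂, β₂) and c₁, c₂ ∈ (0,1). Suppose that for every x ∈ S: σ(α₁ + β₁ᵀx)/c₁ = σ(α₂ + β₂ᵀx)/c₂ and (1 − σ(α₁ + β₁ᵀx))/(1 − c₁) = (1 − σ(α₂ + β₂ᵀx))/(1 − c₂). Then β₁ = β₂; and if moreover β₂ ≠ 0, then also α₁ = α₂ and c₁ = c₂. -/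
/-- If two parameter configurations produce the same normalized case density `φ(x,θ)/c` and
control density `(1 − φ(x,θ))/(1 − c)` on a set `S` whose affine span is all of `ℝ^p`, then
the slopes agree; if moreover the slope is nonzero, the intercepts and the case proportions
agree as well. -/
theorem identifiability_from_case_control_densities
    (p : ℕ) (S : Set (Fin p → ℝ))
    (hS : ∀ (a : ℝ) (u : Fin p → ℝ), (∀ x ∈ S, a + ∑ i, u i * x i = 0) → a = 0 ∧ u = 0)
    (α₁ α₂ : ℝ) (β₁ β₂ : Fin p → ℝ) (c₁ c₂ : ℝ)
    (hc₁ : c₁ ∈ Set.Ioo (0 : ℝ) 1) (hc₂ : c₂ ∈ Set.Ioo (0 : ℝ) 1)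
    (hcase : ∀ x ∈ S,
      logistic (α₁ + ∑ i, β₁ i * x i) / c₁ = logistic (α₂ + ∑ i, β₂ i * x i) / c₂)
    (hcontrol : ∀ x ∈ S,
      (1 - logistic (α₁ + ∑ i, β₁ i * x i)) / (1 - c₁)
        = (1 - logistic (α₂ + ∑ i, β₂ i * x i)) / (1 - c₂)) :
    β₁ = β₂ ∧ (β₂ ≠ 0 → α₁ = α₂ ∧ c₁ = c₂) := by
  obtain ⟨hc₁0, hc₁1⟩ := hc₁
  obtain ⟨hc₂0, hc₂1⟩ := hc₂
  have h1c₁ : (0:ℝ) < 1 - c₁ := by linarith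
  have h1c₂ : (0:ℝ) < 1 - c₂ := by linarith
  -- control equation in cleared form
  have hB : ∀ x ∈ S,
      (1 + Real.exp (α₂ + ∑ i, β₂ i * x i)) * (1 - c₂)
        = (1 + Real.exp (α₁ + ∑ i, β₁ i * x i)) * (1 - c₁) := by
    intro x hx
    have h2 := hcontrol x hx
    have e1 := Real.exp_pos (α₁ + ∑ i, β₁ i * x i)
    have e2 := Real.exp_pos (α₂ + ∑ i, β₂ i * x i)
    unfold logistic at h2
    rw [div_eq_div_iff h1c₁.ne' h1c₂.ne'] at h2
    field_simp at h2
    nlinarith [h2]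
  -- case equation in cleared form
  have hA : ∀ x ∈ S,
      Real.exp (α₁ + ∑ i, β₁ i * x i) * c₂ * (1 + Real.exp (α₂ + ∑ i, β₂ i * x i))
        = Real.exp (α₂ + ∑ i, β₂ i * x i) * c₁ * (1 + Real.exp (α₁ + ∑ i, β₁ i * x i)) := by
    intro x hx
    have h1 := hcase x hx
    have e1 := Real.exp_pos (α₁ + ∑ i, β₁ i * x i)
    have e2 := Real.exp_pos (α₂ + ∑ i, β₂ i * x i)
    unfold logistic at h1
    rw [div_eq_div_iff hc₁0.ne' hc₂0.ne'] at h1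
    field_simp at h1
    nlinarith [h1]
  -- key multiplicative identity
  have key : ∀ x ∈ S,
      Real.exp (α₁ + ∑ i, β₁ i * x i) * (c₂ * (1 - c₁))
        = Real.exp (α₂ + ∑ i, β₂ i * x i) * (c₁ * (1 - c₂)) := by
    intro x hx
    have hA' := hA x hx
    have hB' := hB x hx
    have e1 := Real.exp_pos (α₁ + ∑ i, β₁ i * x i)
    have e2 := Real.exp_pos (α₂ + ∑ i, β₂ i * x i)
    have hpos : (0:ℝ) < (1 + Real.exp (α₁ + ∑ i, β₁ i * x i)) * (1 + Real.exp (α₂ + ∑ i, β₂ i * x i)) := by positivity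
    apply mul_right_cancel₀ hpos.ne'
    linear_combination ((1 + Real.exp (α₁ + ∑ i, β₁ i * x i)) * (1 - c₁)) * hA'
      - (Real.exp (α₂ + ∑ i, β₂ i * x i) * c₁ * (1 + Real.exp (α₁ + ∑ i, β₁ i * x i))) * hB'
  -- take logs
  have hlog : ∀ x ∈ S,
      (α₁ - α₂ + (Real.log (c₂ * (1 - c₁)) - Real.log (c₁ * (1 - c₂))))
        + ∑ i, (β₁ i - β₂ i) * x i = 0 := by
    intro x hx
    have hk := key x hx
    have hK₁ : (0:ℝ) < c₂ * (1 - c₁) := by positivity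
    have hK₂ : (0:ℝ) < c₁ * (1 - c₂) := by positivity
    have := congrArg Real.log hk
    rw [Real.log_mul (Real.exp_pos _).ne' hK₁.ne',
        Real.log_mul (Real.exp_pos _).ne' hK₂.ne',
        Real.log_exp, Real.log_exp] at this
    have hsum : ∑ i, (β₁ i - β₂ i) * x i = (∑ i, β₁ i * x i) - ∑ i, β₂ i * x i := by
      rw [← Finset.sum_sub_distrib]; congr 1; ext i; ring
    rw [hsum]; linarith
  obtain ⟨ha, hu⟩ := hS _ _ hlog
  have hβeq : β₁ = β₂ := by
    funext i
    have := congrFun hu i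
    simpa [sub_eq_zero] using this
  refine ⟨hβeq, fun hβ => ?_⟩
  -- find two points with different linear values
  have hex : ∃ x ∈ S, ∃ y ∈ S, (∑ i, β₂ i * x i) ≠ (∑ i, β₂ i * y i) := by
    by_contra h
    push_neg at h
    rcases Set.eq_empty_or_nonempty S with hemp | ⟨x₀, hx₀⟩
    · have := hS 1 0 (by simp [hemp])
      exact one_ne_zero this.1
    · have := hS (-(∑ i, β₂ i * x₀ i)) β₂ (fun x hx => by
        have := h x hx x₀ hx₀; linarith)
      exact hβ this.2
  obtain ⟨x, hx, y, hy, hxy⟩ := hex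
  subst hβeq
  have hBx := hB x hx
  have hBy := hB y hy
  set s : ℝ := ∑ i, β₁ i * x i with hs
  set s' : ℝ := ∑ i, β₁ i * y i with hs'
  have hes : Real.exp s ≠ Real.exp s' := fun h => hxy (Real.exp_injective h)
  rw [Real.exp_add, Real.exp_add] at hBx hBy
  -- subtract
  have hcoef : Real.exp α₂ * (1 - c₂) = Real.exp α₁ * (1 - c₁) := by
    have hsub : Real.exp α₂ * (1 - c₂) * (Real.exp s - Real.exp s')
        = Real.exp α₁ * (1 - c₁) * (Real.exp s - Real.exp s') := by linear_combination hBx - hBy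
    exact mul_right_cancel₀ (sub_ne_zero.mpr hes) hsub
  have hceq : c₁ = c₂ := by linear_combination hBx - Real.exp s * hcoef
  have hαeq : α₁ = α₂ := by
    have : Real.exp α₂ = Real.exp α₁ := by
      rw [hceq] at hcoef
      exact mul_right_cancel₀ h1c₂.ne' hcoef
    exact (Real.exp_injective this).symm
  exact ⟨hαeq, hceq⟩
end

section
/- Let f be a probability density on ℝ^p (f ≥ 0 and ∫ f = 1), let θ = (α, β), assume c = ∫ φ(x,θ) f(x) dx ∈ (0,1), and let f₁, f₀ be the case and control densities. For any ρ ∈ (0,1), define α' = α + log(ρ(1−c)/((1−ρ)c)), θ' = (α', β), and f'(x) = ρ f₁(x) + (1 − ρ) f₀(x). Then: (i) ∫ f' = 1; (ii) ∫ φ(x, θ') f'(x) dx = ρ; and (iii) for every x ∈ ℝ^p, φ(x, θ') f'(x)/ρ = f₁(x) and (1 − φ(x, θ')) f'(x)/(1 − ρ) = f₀(x). Consequently, every intercept value of the form α + log(ρ(1−c)/((1−ρ)c)), ρ ∈ (0,1), reproduces exactly the same case and control densities with the same slope β, so the intercept α cannot be identified from case-control data alone. -/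
open MeasureTheory

/-- The logistic regression model `φ(x, θ) = σ(α + βᵀx)`. -/
noncomputable def phi (p : ℕ) (α : ℝ) (β : Fin p → ℝ) (x : Fin p → ℝ) : ℝ :=
  logistic (α + ∑ i, β i * x i)

lemma logistic_shift (t k : ℝ) (hk : 0 < k) :
    logistic (t + Real.log k) = Real.exp t * k / (1 + Real.exp t * k) := by
  unfold logistic
  rw [Real.exp_add, Real.exp_log hk]

/-- Non-identifiability of the intercept from case-control data alone: for any `ρ ∈ (0,1)`,
the shifted intercept `α' = α + log(ρ(1−c)/((1−ρ)c))` with the same slope `β` and the mixture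
marginal `f' = ρ f₁ + (1 − ρ) f₀` reproduces exactly the same case and control densities,
with marginal case proportion `ρ`. -/
theorem intercept_not_identifiable_from_case_control
    (p : ℕ) (α : ℝ) (β : Fin p → ℝ) (f : (Fin p → ℝ) → ℝ)
    (hf0 : ∀ x, 0 ≤ f x) (hfint : Integrable f) (hf1 : ∫ x : Fin p → ℝ, f x = 1)
    (hφfint : Integrable (fun x : Fin p → ℝ => phi p α β x * f x))
    (c : ℝ) (hc : c = ∫ x : Fin p → ℝ, phi p α β x * f x) (hc01 : c ∈ Set.Ioo (0 : ℝ) 1)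
    (f₁ f₀ : (Fin p → ℝ) → ℝ)
    (hf₁ : ∀ x, f₁ x = phi p α β x * f x / c)
    (hf₀ : ∀ x, f₀ x = (1 - phi p α β x) * f x / (1 - c))
    (ρ : ℝ) (hρ : ρ ∈ Set.Ioo (0 : ℝ) 1)
    (α' : ℝ) (hα' : α' = α + Real.log (ρ * (1 - c) / ((1 - ρ) * c)))
    (f' : (Fin p → ℝ) → ℝ) (hf' : ∀ x, f' x = ρ * f₁ x + (1 - ρ) * f₀ x) :
    (∫ x : Fin p → ℝ, f' x = 1) ∧
    (∫ x : Fin p → ℝ, phi p α' β x * f' x = ρ) ∧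
    (∀ x : Fin p → ℝ,
      phi p α' β x * f' x / ρ = f₁ x ∧ (1 - phi p α' β x) * f' x / (1 - ρ) = f₀ x) := by
  obtain ⟨hc0, hc1⟩ := hc01
  obtain ⟨hρ0, hρ1⟩ := hρ
  have hc1' : 0 < 1 - c := by linarith
  have hρ1' : 0 < 1 - ρ := by linarith
  have hk : 0 < ρ * (1 - c) / ((1 - ρ) * c) := by positivity
  set k : ℝ := ρ * (1 - c) / ((1 - ρ) * c) with hkdef
  -- pointwise keys
  have hphi' : ∀ x : Fin p → ℝ, phi p α' β x =
      Real.exp (α + ∑ i, β i * x i) * k / (1 + Real.exp (α + ∑ i, β i * x i) * k) := by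
    intro x
    have : α' + ∑ i, β i * x i = (α + ∑ i, β i * x i) + Real.log k := by
      rw [hα']; ring
    rw [phi, this, logistic_shift _ _ hk]
  have key1 : ∀ x : Fin p → ℝ, phi p α' β x * f' x = ρ * f₁ x := by
    intro x
    set e : ℝ := Real.exp (α + ∑ i, β i * x i) with hedef
    have he : 0 < e := Real.exp_pos _
    have h1e : 0 < 1 + e := by linarith
    have h1ek : 0 < 1 + e * k := by positivity
    have hφ : phi p α β x = e / (1 + e) := rfl
    rw [hphi' x, hf' x, hf₁ x, hf₀ x, hφ, hkdef]
    field_simp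
    ring
  have key2 : ∀ x : Fin p → ℝ, (1 - phi p α' β x) * f' x = (1 - ρ) * f₀ x := by
    intro x
    set e : ℝ := Real.exp (α + ∑ i, β i * x i) with hedef
    have he : 0 < e := Real.exp_pos _
    have h1e : 0 < 1 + e := by linarith
    have h1ek : 0 < 1 + e * k := by positivity
    have hφ : phi p α β x = e / (1 + e) := rfl
    rw [hphi' x, hf' x, hf₁ x, hf₀ x, hφ, hkdef]
    field_simp
    ring
  -- integrability and integrals of f₁, f₀
  have hf₁int : Integrable f₁ := by
    have : Integrable (fun x => phi p α β x * f x / c) := hφfint.div_const c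
    exact this.congr (Filter.Eventually.of_forall fun x => (hf₁ x).symm)
  have hf₀int : Integrable f₀ := by
    have : Integrable (fun x => (1 - phi p α β x) * f x / (1 - c)) := by
      have h : Integrable (fun x => f x - phi p α β x * f x) := hfint.sub hφfint
      have := h.div_const (1 - c)
      exact this.congr (Filter.Eventually.of_forall fun x => by ring)
    exact this.congr (Filter.Eventually.of_forall fun x => (hf₀ x).symm)
  have hint₁ : ∫ x : Fin p → ℝ, f₁ x = 1 := by
    have : ∫ x : Fin p → ℝ, f₁ x = (∫ x : Fin p → ℝ, phi p α β x * f x) / c := by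
      rw [← integral_div]
      exact integral_congr_ae (Filter.Eventually.of_forall fun x => hf₁ x)
    rw [this, ← hc, div_self hc0.ne']
  have hint₀ : ∫ x : Fin p → ℝ, f₀ x = 1 := by
    have : ∫ x : Fin p → ℝ, f₀ x =
        ((∫ x : Fin p → ℝ, f x) - ∫ x : Fin p → ℝ, phi p α β x * f x) / (1 - c) := by
      rw [← integral_sub hfint hφfint, ← integral_div]
      exact integral_congr_ae (Filter.Eventually.of_forall fun x => by
        rw [hf₀ x]; ring)
    rw [this, hf1, ← hc, div_self hc1'.ne']
  refine ⟨?_, ?_, ?_⟩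
  · have : ∫ x : Fin p → ℝ, f' x =
        (∫ x : Fin p → ℝ, ρ * f₁ x) + ∫ x : Fin p → ℝ, (1 - ρ) * f₀ x := by
      rw [← integral_add (hf₁int.const_mul ρ) (hf₀int.const_mul (1 - ρ))]
      exact integral_congr_ae (Filter.Eventually.of_forall fun x => hf' x)
    rw [this, integral_const_mul, integral_const_mul, hint₁, hint₀]; ring
  · have : ∫ x : Fin p → ℝ, phi p α' β x * f' x = ∫ x : Fin p → ℝ, ρ * f₁ x :=
      integral_congr_ae (Filter.Eventually.of_forall fun x => key1 x)
    rw [this, integral_const_mul, hint₁, mul_one]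
  · intro x
    constructor
    · rw [key1 x, mul_div_assoc]
      field_simp
    · rw [key2 x, mul_div_assoc]
      field_simp
end

section
/- Let S ⊆ ℝ^p be a set such that any linear functional constant on S is zero, i.e., if uᵀx = uᵀx' for all x, x' ∈ S (u ∈ ℝ^p) then u = 0. Let f, f' : ℝ^p → ℝ be positive on S, let θ₁ = (α₁, β₁), θ₂ = (α₂, β₂), and c₁, c₂ ∈ (0,1). Suppose that for every x ∈ S: φ(x, θ₁) f(x)/c₁ = φ(x, θ₂) f'(x)/c₂ and (1 − φ(x, θ₁)) f(x)/(1 − c₁) = (1 − φ(x, θ₂)) f'(x)/(1 − c₂). Then β₁ = β₂. That is, the slope parameter of the logistic model is identifiable from the case and control densities alone, even though the marginal density and intercept are not. -/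
/-!
The ratio of the case density to the control density is `σ(α + βᵀx)/(1 − σ(α + βᵀx)) · (1 − c)/c
= exp(α + βᵀx) · (1 − c)/c`; the marginal density cancels. Equal case and control densities
therefore force `α₁ + β₁ᵀx + log((1 − c₁)/c₁) = α₂ + β₂ᵀx + log((1 − c₂)/c₂)` on `S`, so
`(β₁ − β₂)ᵀx` is constant on `S`, and `β₁ − β₂ = 0`.
-/

open Real

theorem logistic_div_one_sub_logistic (t : ℝ) : logistic t / (1 - logistic t) = exp t := by
  have h : 1 + exp t ≠ 0 := by positivity
  rw [logistic]
  field_simp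
  ring

theorem case_div_control (t f c : ℝ) (hf : f ≠ 0) :
    logistic t * f / c / ((1 - logistic t) * f / (1 - c)) = exp t * ((1 - c) / c) := by
  rw [← logistic_div_one_sub_logistic t]
  field_simp

theorem exp_mul_odds_eq_of_case_control_eq {t₁ t₂ f₁ f₂ c₁ c₂ : ℝ} (hf₁ : f₁ ≠ 0) (hf₂ : f₂ ≠ 0)
    (hcase : logistic t₁ * f₁ / c₁ = logistic t₂ * f₂ / c₂)
    (hcontrol : (1 - logistic t₁) * f₁ / (1 - c₁) = (1 - logistic t₂) * f₂ / (1 - c₂)) :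
    exp t₁ * ((1 - c₁) / c₁) = exp t₂ * ((1 - c₂) / c₂) := by
  rw [← case_div_control t₁ f₁ c₁ hf₁, ← case_div_control t₂ f₂ c₂ hf₂, hcase, hcontrol]

theorem add_log_eq_add_log_of_exp_mul_eq {a b k l : ℝ} (hk : 0 < k) (hl : 0 < l)
    (h : exp a * k = exp b * l) : a + log k = b + log l := by
  rwa [← exp_eq_exp, exp_add, exp_add, exp_log hk, exp_log hl]

theorem one_sub_div_pos {c : ℝ} (hc : c ∈ Set.Ioo (0 : ℝ) 1) : 0 < (1 - c) / c :=
  div_pos (sub_pos.mpr hc.2) hc.1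

/-- The slope parameter of the logistic model is identifiable from the case and control
densities alone: if two configurations `(α₁, β₁, f)` and `(α₂, β₂, f')` induce the same case
density `φ f/c` and the same control density `(1 − φ) f/(1 − c)` on a set `S` on which any
linear functional that is constant must vanish, then `β₁ = β₂`. -/
theorem slope_identifiable_from_case_control_densities
    (p : ℕ) (S : Set (Fin p → ℝ))
    (hS : ∀ u : Fin p → ℝ,
      (∀ x ∈ S, ∀ x' ∈ S, (∑ i, u i * x i) = ∑ i, u i * x' i) → u = 0)
    (f f' : (Fin p → ℝ) → ℝ) (hf : ∀ x ∈ S, 0 < f x) (hf' : ∀ x ∈ S, 0 < f' x)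
    (α₁ α₂ : ℝ) (β₁ β₂ : Fin p → ℝ) (c₁ c₂ : ℝ)
    (hc₁ : c₁ ∈ Set.Ioo (0 : ℝ) 1) (hc₂ : c₂ ∈ Set.Ioo (0 : ℝ) 1)
    (hcase : ∀ x ∈ S, phi p α₁ β₁ x * f x / c₁ = phi p α₂ β₂ x * f' x / c₂)
    (hcontrol : ∀ x ∈ S,
      (1 - phi p α₁ β₁ x) * f x / (1 - c₁) = (1 - phi p α₂ β₂ x) * f' x / (1 - c₂)) :
    β₁ = β₂ := by
  have hlin : ∀ x ∈ S, ∑ i, (β₁ - β₂) i * x i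
      = α₂ - α₁ + log ((1 - c₂) / c₂) - log ((1 - c₁) / c₁) := by
    intro x hx
    have hodds := exp_mul_odds_eq_of_case_control_eq (hf x hx).ne' (hf' x hx).ne'
      (hcase x hx) (hcontrol x hx)
    have hlog := add_log_eq_add_log_of_exp_mul_eq (one_sub_div_pos hc₁) (one_sub_div_pos hc₂) hodds
    simp only [Pi.sub_apply, sub_mul, Finset.sum_sub_distrib]
    linarith
  refine sub_eq_zero.mp (hS _ fun x hx x' hx' => ?_)
  rw [hlin x hx, hlin x' hx']
end
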